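/- Fix 0 < q < 1 and G ∈ 𝒢 with G ≠ E. Let X_1, X_2, … be i.i.d. random variables with cdf G and let G_n denote the empirical cdf of X_1,…,X_n, G_n(t) = (1/n)·#{i ≤ n : X_i < t}. Then T_q(G_n) → T_q(G) almost surely as n → ∞. -/

import Mathlib

open MeasureTheory Filter Set
open scoped ENNReal

/-- `ℱ`: probability measures supported on `[1,∞)`. -/
def mixSet : Set (Measure ℝ) := {F | IsProbabilityMeasure F ∧ ∀ᵐ m ∂F, 1 ≤ m}

/-- The cdf of the scale mixture of exponentials `E#F`:
`G(t) = ∫ (1 − e^{−t/μ}) dF(μ)` for `t ≥ 0`, and `0` for `t < 0`. -/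
noncomputable def mixCdf (F : Measure ℝ) : ℝ → ℝ :=
  fun t => if 0 ≤ t then ∫ m, (1 - Real.exp (-t / m)) ∂F else 0

/-- The cdf of `Exp(1)`. -/
noncomputable def Ecdf : ℝ → ℝ := fun t => if 0 ≤ t then 1 - Real.exp (-t) else 0

/-- `𝒢`: the scale mixtures of exponentials. -/
def scaleMixtures : Set (ℝ → ℝ) := {G | ∃ F ∈ mixSet, G = mixCdf F}

/-- The FDR functional `T_q(G) = inf {t ≥ 0 : 1 − G(t) ≥ e^{−t}/q}` (`= ∞` if no such `t`),
valued in `ℝ≥0∞`. -/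
noncomputable def Tq (q : ℝ) (G : ℝ → ℝ) : ℝ≥0∞ :=
  sInf (ENNReal.ofReal '' {t : ℝ | 0 ≤ t ∧ Real.exp (-t) / q ≤ 1 - G t})

/-- Exponential distribution on `(0,∞)` with mean `m`. -/
noncomputable def expMeas (m : ℝ) : Measure ℝ :=
  (volume.restrict (Set.Ioi (0:ℝ))).withDensity fun x => ENNReal.ofReal (m⁻¹ * Real.exp (-x / m))

/-- The distribution on `[0,∞)` whose cdf is `mixCdf F`: `μ ~ F`, `X | μ ~ Exp(μ)`. -/
noncomputable def mixMeasure (F : Measure ℝ) : Measure ℝ := F.bind expMeas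

open scoped Classical in
/-- The empirical cdf of the first `n` values of the sequence `X`:
`G_n(t) = (1/n) #{i < n : X i < t}`. -/
noncomputable def empCdf (X : ℕ → ℝ) (n : ℕ) : ℝ → ℝ :=
  fun t => (n : ℝ)⁻¹ * ((Finset.range n).filter fun i => X i < t).card

/-!
For `t ≥ 0`, `1 - G(t) = e^{-t} ψ(t)` with `ψ(t) = ∫ e^{(1 - 1/μ) t} dF(μ)`. Since `G ≠ E`, `F`
charges `(1, ∞)`, so `ψ` increases strictly from `ψ(0) = 1 < 1/q` to `∞`; hence `T_q(G)` is the
point `t₀` where `ψ` crosses `1/q`, and the inequality defining `T_q` fails strictly on `[0, t₀)`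
and holds strictly on `(t₀, ∞)`. By the strong law, almost surely `G_n → G` at every rational,
hence everywhere since the `G_n` are monotone and `G` is continuous. Strictness above `t₀` puts
`T_q(G_n)` below `t₀ + ε` by convergence at a single point; below `t₀`, monotonicity of `G_n`
turns pointwise convergence into a uniform bound on the compact `[0, t₀ - ε]`, which keeps
`T_q(G_n)` above `t₀ - ε`.
-/

open Real Topology ProbabilityTheory

section Threshold

variable {q : ℝ} {G : ℝ → ℝ}

lemma Tq_le_ofReal {t : ℝ} (ht : 0 ≤ t) (h : exp (-t) / q ≤ 1 - G t) :
    Tq q G ≤ ENNReal.ofReal t :=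
  sInf_le ⟨t, ⟨ht, h⟩, rfl⟩

lemma ofReal_le_Tq {s : ℝ} (h : ∀ t ∈ Icc 0 s, 1 - G t < exp (-t) / q) :
    ENNReal.ofReal s ≤ Tq q G := by
  refine le_sInf ?_
  rintro _ ⟨t, ⟨ht, hG⟩, rfl⟩
  exact ENNReal.ofReal_le_ofReal (not_lt.1 fun hts => (h t ⟨ht, hts.le⟩).not_ge hG)

lemma ENNReal.tendsto_nhds_ofReal_of_eventually {ι : Type*} {l : Filter ι} {f : ι → ℝ≥0∞}
    {x : ℝ} (hlo : ∀ y < x, ∀ᶠ i in l, ENNReal.ofReal y ≤ f i)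
    (hhi : ∀ y, x < y → ∀ᶠ i in l, f i ≤ ENNReal.ofReal y) :
    Tendsto f l (𝓝 (ENNReal.ofReal x)) := by
  have hcont := ENNReal.continuous_ofReal.tendsto x
  refine tendsto_order.2 ⟨fun a ha => ?_, fun b hb => ?_⟩
  · obtain ⟨u, hux, hsub⟩ := exists_Ioc_subset_of_mem_nhds
      (hcont.eventually (lt_mem_nhds ha)) ⟨x - 1, by linarith⟩
    obtain ⟨y, huy, hyx⟩ := exists_between hux
    exact (hlo y hyx).mono fun i hi => (hsub ⟨huy, hyx.le⟩).trans_le hi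
  · obtain ⟨u, hxu, hsub⟩ := exists_Ico_subset_of_mem_nhds
      (hcont.eventually (gt_mem_nhds hb)) ⟨x + 1, by linarith⟩
    obtain ⟨y, hxy, hyu⟩ := exists_between hxu
    exact (hhi y hxy).mono fun i hi => hi.trans_lt (hsub ⟨hxy.le, hyu⟩)

lemma Tq_eq_of_crossing {t₀ : ℝ} (ht₀ : 0 ≤ t₀)
    (hbelow : ∀ t ∈ Ico 0 t₀, 1 - G t < exp (-t) / q)
    (habove : ∀ t, t₀ < t → exp (-t) / q < 1 - G t) :
    Tq q G = ENNReal.ofReal t₀ :=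
  tendsto_nhds_unique tendsto_const_nhds <| ENNReal.tendsto_nhds_ofReal_of_eventually
    (l := (atTop : Filter ℕ))
    (fun _ hy => Eventually.of_forall fun _ =>
      ofReal_le_Tq fun t ht => hbelow t ⟨ht.1, ht.2.trans_lt hy⟩)
    (fun y hy => Eventually.of_forall fun _ =>
      Tq_le_ofReal (ht₀.trans hy.le) (habove y hy).le)

end Threshold

section MonotoneConvergence

variable {ι : Type*} {l : Filter ι} {H : ι → ℝ → ℝ} {G : ℝ → ℝ}

lemma tendsto_of_monotone_of_tendsto_rat (hH : ∀ i, Monotone (H i)) (hG : Continuous G)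
    (hconv : ∀ r : ℚ, Tendsto (fun i => H i r) l (𝓝 (G r))) (t : ℝ) :
    Tendsto (fun i => H i t) l (𝓝 (G t)) := by
  refine tendsto_order.2 ⟨fun a ha => ?_, fun b hb => ?_⟩
  · obtain ⟨u, hut, hsub⟩ := exists_Ioc_subset_of_mem_nhds
      ((hG.tendsto t).eventually (lt_mem_nhds ha)) ⟨t - 1, by linarith⟩
    obtain ⟨r, hur, hrt⟩ := exists_rat_btwn hut
    filter_upwards [(hconv r).eventually (lt_mem_nhds (hsub ⟨hur, hrt.le⟩))] with i hi
    exact hi.trans_le (hH i hrt.le)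
  · obtain ⟨u, htu, hsub⟩ := exists_Ico_subset_of_mem_nhds
      ((hG.tendsto t).eventually (gt_mem_nhds hb)) ⟨t + 1, by linarith⟩
    obtain ⟨r, htr, hru⟩ := exists_rat_btwn htu
    filter_upwards [(hconv r).eventually (gt_mem_nhds (hsub ⟨htr.le, hru⟩))] with i hi
    exact (hH i htr.le).trans_lt hi

/-- One half of Pólya's theorem on pointwise convergence of monotone functions. -/
lemma eventually_forall_lt_of_monotone (hH : ∀ i, Monotone (H i)) (hG : Continuous G)
    (hconv : ∀ t, Tendsto (fun i => H i t) l (𝓝 (G t))) {f : ℝ → ℝ} (hf : Continuous f)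
    {K : Set ℝ} (hK : IsCompact K) (hfG : ∀ t ∈ K, f t < G t) :
    ∀ᶠ i in l, ∀ t ∈ K, f t < H i t := by
  refine hK.induction_on (p := fun S => ∀ᶠ i in l, ∀ t ∈ S, f t < H i t) (by simp)
    (fun S T hST hT => hT.mono fun i hi t ht => hi t (hST ht))
    (fun S T hS hT => (hS.and hT).mono fun i hi t ht => ht.elim (hi.1 t) (hi.2 t))
    fun x hx => ?_
  obtain ⟨c, hfc, hcG⟩ := exists_between (hfG x hx)
  obtain ⟨u, hux, hsub⟩ := exists_Ioc_subset_of_mem_nhds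
    ((hG.tendsto x).eventually (lt_mem_nhds hcG)) ⟨x - 1, by linarith⟩
  obtain ⟨s, hus, hsx⟩ := exists_between hux
  refine ⟨Ioi s ∩ {t | f t < c}, mem_nhdsWithin_of_mem_nhds
    (inter_mem (Ioi_mem_nhds hsx) ((hf.tendsto x).eventually (gt_mem_nhds hfc))), ?_⟩
  filter_upwards [(hconv s).eventually (lt_mem_nhds (hsub ⟨hus, hsx.le⟩))] with i hi t ht
  exact ht.2.trans (hi.trans_le (hH i ht.1.le))

lemma tendsto_Tq_of_crossing {q : ℝ} (hG : Continuous G) {t₀ : ℝ} (ht₀ : 0 ≤ t₀)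
    (hbelow : ∀ t ∈ Ico 0 t₀, 1 - G t < exp (-t) / q)
    (habove : ∀ t, t₀ < t → exp (-t) / q < 1 - G t)
    (hH : ∀ i, Monotone (H i)) (hconv : ∀ t, Tendsto (fun i => H i t) l (𝓝 (G t))) :
    Tendsto (fun i => Tq q (H i)) l (𝓝 (ENNReal.ofReal t₀)) := by
  refine ENNReal.tendsto_nhds_ofReal_of_eventually (fun y hy => ?_) fun y hy => ?_
  · have hK : ∀ t ∈ Icc 0 y, 1 - exp (-t) / q < G t := fun t ht => by
      linarith [hbelow t ⟨ht.1, ht.2.trans_lt hy⟩]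
    filter_upwards [eventually_forall_lt_of_monotone hH hG hconv (by fun_prop) isCompact_Icc hK]
      with i hi
    exact ofReal_le_Tq fun t ht => by linarith [hi t ht]
  · have hGy : G y < 1 - exp (-y) / q := by linarith [habove y hy]
    filter_upwards [(hconv y).eventually (gt_mem_nhds hGy)] with i hi
    exact Tq_le_ofReal (ht₀.trans hy.le) (by linarith)

end MonotoneConvergence

lemma integral_pos_of_pos_on {α : Type*} [MeasurableSpace α] {μ : Measure α} {f : α → ℝ}
    {s : Set α} (hf : Integrable f μ) (hnn : 0 ≤ᵐ[μ] f) (hs : μ s ≠ 0)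
    (hpos : ∀ x ∈ s, 0 < f x) : 0 < ∫ x, f x ∂μ :=
  (integral_pos_iff_support_of_nonneg_ae hnn hf).2 <| pos_iff_ne_zero.2 fun h =>
    hs (measure_mono_null (fun x hx => (hpos x hx).ne') h)

section Mixture

variable {F : Measure ℝ}

/-- `Ḡ = 1 - E#F` on `[0, ∞)`. -/
noncomputable def mixSurv (F : Measure ℝ) (t : ℝ) : ℝ := ∫ m, exp (-t / m) ∂F

/-- `Ḡ / Ē`. -/
noncomputable def survRatio (F : Measure ℝ) (t : ℝ) : ℝ := exp t * mixSurv F t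

lemma exp_neg_div_le_one {t m : ℝ} (ht : 0 ≤ t) (hm : 0 < m) : exp (-t / m) ≤ 1 :=
  exp_le_one_iff.2 (div_nonpos_of_nonpos_of_nonneg (neg_nonpos.2 ht) hm.le)

lemma norm_exp_neg_div_le_one {t m : ℝ} (ht : 0 ≤ t) (hm : 0 < m) : ‖exp (-t / m)‖ ≤ 1 := by
  rw [norm_of_nonneg (exp_pos _).le]
  exact exp_neg_div_le_one ht hm

lemma integrable_exp_neg_div [IsFiniteMeasure F] (hF : ∀ᵐ m ∂F, 0 < m) {t : ℝ} (ht : 0 ≤ t) :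
    Integrable (fun m => exp (-t / m)) F :=
  .of_bound (by fun_prop) 1 (hF.mono fun _ hm => norm_exp_neg_div_le_one ht hm)

lemma mixSurv_zero [IsProbabilityMeasure F] : mixSurv F 0 = 1 := by
  simp [mixSurv]

lemma one_sub_mixCdf [IsProbabilityMeasure F] (hF : ∀ᵐ m ∂F, 0 < m) {t : ℝ} (ht : 0 ≤ t) :
    1 - mixCdf F t = mixSurv F t := by
  rw [mixCdf, if_pos ht, integral_sub (integrable_const 1) (integrable_exp_neg_div hF ht)]
  simp [mixSurv]

lemma mixCdf_eq_one_sub_mixSurv_max [IsProbabilityMeasure F] (hF : ∀ᵐ m ∂F, 0 < m) (t : ℝ) :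
    mixCdf F t = 1 - mixSurv F (max t 0) := by
  rcases lt_or_ge t 0 with ht | ht
  · rw [max_eq_right ht.le, mixSurv_zero, sub_self, mixCdf, if_neg ht.not_ge]
  · rw [max_eq_left ht, ← one_sub_mixCdf hF ht, sub_sub_cancel]

lemma continuousOn_mixSurv [IsFiniteMeasure F] (hF : ∀ᵐ m ∂F, 0 < m) :
    ContinuousOn (mixSurv F) (Ici 0) :=
  continuousOn_of_dominated (fun _ _ => by fun_prop)
    (fun _ ht => hF.mono fun _ hm => norm_exp_neg_div_le_one ht hm) (integrable_const 1)
    (Eventually.of_forall fun _ => by fun_prop)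

lemma continuous_mixCdf [IsProbabilityMeasure F] (hF : ∀ᵐ m ∂F, 0 < m) :
    Continuous (mixCdf F) := by
  rw [funext (mixCdf_eq_one_sub_mixSurv_max hF)]
  exact continuous_const.sub ((continuousOn_mixSurv hF).comp_continuous
    (continuous_id.max continuous_const) fun t => le_max_right t 0)

lemma one_sub_mixCdf_eq_exp_mul_survRatio [IsProbabilityMeasure F] (hF : ∀ᵐ m ∂F, 0 < m)
    {t : ℝ} (ht : 0 ≤ t) : 1 - mixCdf F t = exp (-t) * survRatio F t := by
  rw [one_sub_mixCdf hF ht, survRatio, ← mul_assoc, ← exp_add, neg_add_cancel, exp_zero, one_mul]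

lemma survRatio_eq_integral (F : Measure ℝ) (t : ℝ) :
    survRatio F t = ∫ m, exp ((1 - m⁻¹) * t) ∂F := by
  rw [survRatio, mixSurv, ← integral_const_mul]
  congr with m
  rw [← exp_add]
  ring_nf

lemma integrable_exp_mul_one_sub_inv [IsFiniteMeasure F] (hF : ∀ᵐ m ∂F, 0 < m) {t : ℝ}
    (ht : 0 ≤ t) : Integrable (fun m => exp ((1 - m⁻¹) * t)) F := by
  refine .of_bound (by fun_prop) (exp t) (hF.mono fun m hm => ?_)
  rw [norm_of_nonneg (exp_pos _).le, exp_le_exp]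
  nlinarith [inv_pos.2 hm]

lemma strictMonoOn_survRatio [IsFiniteMeasure F] (hF : ∀ᵐ m ∂F, 1 ≤ m)
    (hpos : F {m | 1 < m} ≠ 0) : StrictMonoOn (survRatio F) (Ici 0) := by
  intro s hs t ht hst
  have hF0 : ∀ᵐ m ∂F, 0 < m := hF.mono fun _ hm => zero_lt_one.trans_le hm
  rw [survRatio_eq_integral, survRatio_eq_integral, ← sub_pos,
    ← integral_sub (integrable_exp_mul_one_sub_inv hF0 ht) (integrable_exp_mul_one_sub_inv hF0 hs)]
  refine integral_pos_of_pos_on ((integrable_exp_mul_one_sub_inv hF0 ht).sub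
    (integrable_exp_mul_one_sub_inv hF0 hs)) (hF.mono fun m hm => ?_) hpos fun m hm => ?_
  · exact sub_nonneg.2 (exp_le_exp.2 (mul_le_mul_of_nonneg_left hst.le
      (sub_nonneg.2 (inv_le_one_of_one_le₀ hm))))
  · exact sub_pos.2 (exp_lt_exp.2 (mul_lt_mul_of_pos_left hst
      (sub_pos.2 (inv_lt_one_of_one_lt₀ hm))))

/-- `e^x ≥ 1 + x` gives the linear lower bound `1 + t ∫ (1 - 1/μ) dF` on the ratio. -/
lemma exists_lt_survRatio [IsProbabilityMeasure F] (hF : ∀ᵐ m ∂F, 1 ≤ m)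
    (hpos : F {m | 1 < m} ≠ 0) (C : ℝ) : ∃ t, 0 ≤ t ∧ C < survRatio F t := by
  have hF0 : ∀ᵐ m ∂F, 0 < m := hF.mono fun _ hm => zero_lt_one.trans_le hm
  have hint : Integrable (fun m : ℝ => 1 - m⁻¹) F := .of_bound (by fun_prop) 1 <|
    hF.mono fun m hm => by
      rw [Real.norm_eq_abs, abs_le]
      constructor <;> nlinarith [inv_pos.2 (zero_lt_one.trans_le hm), inv_le_one_of_one_le₀ hm]
  set c := ∫ m, (1 - m⁻¹) ∂F
  have hc : 0 < c := integral_pos_of_pos_on hint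
    (hF.mono fun _ hm => sub_nonneg.2 (inv_le_one_of_one_le₀ hm)) hpos
    fun _ hm => sub_pos.2 (inv_lt_one_of_one_lt₀ hm)
  have hlin : ∀ t, 0 ≤ t → 1 + c * t ≤ survRatio F t := fun t ht => calc
    1 + c * t = ∫ m, (1 + (1 - m⁻¹) * t) ∂F := by
      rw [integral_add (integrable_const 1) (hint.mul_const t), integral_mul_const]; simp [c]
    _ ≤ survRatio F t := by
      rw [survRatio_eq_integral]
      exact integral_mono ((integrable_const 1).add (hint.mul_const t))
        (integrable_exp_mul_one_sub_inv hF0 ht) fun m => by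
          linarith [add_one_le_exp ((1 - m⁻¹) * t)]
  refine ⟨|C| / c, by positivity, ?_⟩
  calc C ≤ |C| := le_abs_self C
    _ < 1 + c * (|C| / c) := by rw [mul_div_cancel₀ _ hc.ne']; linarith
    _ ≤ survRatio F (|C| / c) := hlin _ (by positivity)

lemma measure_one_lt_ne_zero [IsProbabilityMeasure F] (hF : ∀ᵐ m ∂F, 1 ≤ m)
    (hne : mixCdf F ≠ Ecdf) : F {m | 1 < m} ≠ 0 := by
  contrapose! hne
  have hone : ∀ᵐ m ∂F, m = 1 := by
    filter_upwards [hF, measure_eq_zero_iff_ae_notMem.1 hne] with m h1 h2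
    exact le_antisymm (not_lt.1 h2) h1
  funext t
  simp only [mixCdf, Ecdf]
  split_ifs
  · rw [integral_congr_ae (g := fun _ => 1 - exp (-t))
      (hone.mono fun m hm => by rw [hm, div_one])]
    simp
  · rfl

lemma exists_crossing [IsProbabilityMeasure F] {q : ℝ} (hq : 0 < q) (hq1 : q < 1)
    (hF : ∀ᵐ m ∂F, 1 ≤ m) (hpos : F {m | 1 < m} ≠ 0) :
    ∃ t₀, 0 ≤ t₀ ∧ (∀ t ∈ Ico 0 t₀, 1 - mixCdf F t < exp (-t) / q) ∧
      ∀ t, t₀ < t → exp (-t) / q < 1 - mixCdf F t := by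
  have hF0 : ∀ᵐ m ∂F, 0 < m := hF.mono fun _ hm => zero_lt_one.trans_le hm
  obtain ⟨T, hT, hCT⟩ := exists_lt_survRatio hF hpos q⁻¹
  have hcont : ContinuousOn (survRatio F) (Icc 0 T) :=
    (continuous_exp.continuousOn.mul (continuousOn_mixSurv hF0)).mono Icc_subset_Ici_self
  have h0 : survRatio F 0 ≤ q⁻¹ := by
    rw [survRatio, mixSurv_zero, exp_zero, one_mul]
    exact (one_lt_inv₀ hq).2 hq1 |>.le
  obtain ⟨t₀, ⟨ht₀, -⟩, hψ⟩ := intermediate_value_Icc hT hcont ⟨h0, hCT.le⟩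
  have hmono := strictMonoOn_survRatio hF hpos
  refine ⟨t₀, ht₀, fun t ht => ?_, fun t ht => ?_⟩
  · rw [one_sub_mixCdf_eq_exp_mul_survRatio hF0 ht.1, div_eq_mul_inv, ← hψ]
    exact mul_lt_mul_of_pos_left (hmono ht.1 ht₀ ht.2) (exp_pos _)
  · have ht0 : 0 ≤ t := ht₀.trans ht.le
    rw [one_sub_mixCdf_eq_exp_mul_survRatio hF0 ht0, div_eq_mul_inv, ← hψ]
    exact mul_lt_mul_of_pos_left (hmono ht₀ ht0 ht) (exp_pos _)

end Mixture

lemma expMeas_eq_expMeasure (m : ℝ) : expMeas m = expMeasure m⁻¹ := by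
  rw [expMeas, ← withDensity_indicator measurableSet_Ioi, expMeasure, gammaMeasure]
  refine withDensity_congr_ae ?_
  filter_upwards [Measure.ae_ne volume 0] with x hx
  rcases hx.lt_or_gt with hx | hx
  · rw [indicator_of_notMem (s := Ioi 0) (notMem_Ioi.2 hx.le)]
    exact (gammaPDF_of_neg hx).symm
  · rw [indicator_of_mem (s := Ioi 0) hx]
    simp [gammaPDF, gammaPDFReal, hx.le, div_eq_inv_mul]

lemma expMeas_Iio {m : ℝ} (hm : 0 < m) (s : ℝ) :
    expMeas m (Iio s) = ENNReal.ofReal (if 0 ≤ s then 1 - exp (-s / m) else 0) := by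
  have := isProbabilityMeasure_expMeasure (inv_pos.2 hm)
  have hac : expMeasure m⁻¹ ≪ volume := withDensity_absolutelyContinuous _ _
  rw [expMeas_eq_expMeasure, measure_congr (hac.ae_eq Iio_ae_eq_Iic), ← ofReal_cdf,
    cdf_expMeasure_eq (inv_pos.2 hm), neg_div, div_eq_inv_mul]

lemma measurable_expMeas : Measurable expMeas := by
  refine Measure.measurable_of_measurable_coe _ fun s hs => ?_
  simp only [expMeas, withDensity_apply _ hs]
  exact Measurable.lintegral_prod_right
    (f := fun m x => ENNReal.ofReal (m⁻¹ * exp (-x / m))) (by fun_prop)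

lemma measureReal_mixMeasure_Iio {F : Measure ℝ} [IsProbabilityMeasure F]
    (hF : ∀ᵐ m ∂F, 0 < m) (s : ℝ) : (mixMeasure F).real (Iio s) = mixCdf F s := by
  rw [Measure.real, mixMeasure, Measure.bind_apply measurableSet_Iio
    measurable_expMeas.aemeasurable, lintegral_congr_ae (hF.mono fun m hm => expMeas_Iio hm s)]
  rcases le_or_gt 0 s with hs | hs
  · have hint : Integrable (fun m => 1 - exp (-s / m)) F :=
      (integrable_const 1).sub (integrable_exp_neg_div hF hs)
    have hnn : 0 ≤ᵐ[F] fun m => 1 - exp (-s / m) :=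
      hF.mono fun _ hm => sub_nonneg.2 (exp_neg_div_le_one hs hm)
    simp only [if_pos hs]
    rw [← ofReal_integral_eq_lintegral_ofReal hint hnn,
      ENNReal.toReal_ofReal (integral_nonneg_of_ae hnn), mixCdf, if_pos hs]
  · simp [mixCdf, hs.not_ge]

lemma empCdf_eq_average (X : ℕ → ℝ) (n : ℕ) (t : ℝ) :
    empCdf X n t = (∑ i ∈ Finset.range n, (Iio t).indicator 1 (X i)) / n := by
  rw [empCdf, Finset.card_filter, div_eq_inv_mul]
  push_cast
  simp [indicator_apply]

lemma monotone_empCdf (X : ℕ → ℝ) (n : ℕ) : Monotone (empCdf X n) := by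
  intro s t hst
  simp only [empCdf_eq_average]
  gcongr
  exact zero_le_one

lemma ae_tendsto_empCdf {Ω : Type*} [MeasurableSpace Ω] {P : Measure Ω} [IsFiniteMeasure P]
    {X : ℕ → Ω → ℝ} (hmeas : ∀ i, Measurable (X i))
    (hindep : Pairwise fun i j => IndepFun (X i) (X j) P) {μ : Measure ℝ}
    (hdist : ∀ i, P.map (X i) = μ) (t : ℝ) :
    ∀ᵐ ω ∂P, Tendsto (fun n => empCdf (X · ω) n t) atTop (𝓝 (μ.real (Iio t))) := by
  set f : ℝ → ℝ := (Iio t).indicator 1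
  have hf : Measurable f := measurable_one.indicator measurableSet_Iio
  have hint : Integrable (f ∘ X 0) P :=
    .of_bound (hf.comp (hmeas 0)).aestronglyMeasurable 1 (Eventually.of_forall fun ω => by
      simp only [Function.comp, f, indicator_apply]; split_ifs <;> simp)
  have hmean : P[f ∘ X 0] = μ.real (Iio t) := by
    rw [← hdist 0, ← integral_indicator_one measurableSet_Iio,
      integral_map (hmeas 0).aemeasurable hf.aestronglyMeasurable]
    rfl
  have hslln := strong_law_ae_real (fun i => f ∘ X i) hint
    (fun i j hij => (hindep hij).comp hf hf)
    fun i => ⟨(hf.comp (hmeas i)).aemeasurable, (hf.comp (hmeas 0)).aemeasurable, by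
      rw [← Measure.map_map hf (hmeas i), ← Measure.map_map hf (hmeas 0), hdist, hdist]⟩
  filter_upwards [hslln] with ω hω
  refine (hmean ▸ hω).congr fun n => ?_
  rw [empCdf_eq_average]
  rfl

/-- Corollary 4.1, consistency: if `X₁, X₂, …` are i.i.d. with cdf
`G = mixCdf F ∈ 𝒢`, `G ≠ E`, then `T_q(G_n) → T_q(G)` almost surely. -/
theorem Tq_empirical_consistent (q : ℝ) (hq : 0 < q) (hq1 : q < 1)
    (F : Measure ℝ) (hF : F ∈ mixSet) (hne : mixCdf F ≠ Ecdf)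
    {Ω : Type*} [MeasurableSpace Ω] (P : Measure Ω) [IsProbabilityMeasure P]
    (X : ℕ → Ω → ℝ) (hmeas : ∀ i, Measurable (X i))
    (hindep : ProbabilityTheory.iIndepFun X P)
    (hdist : ∀ i, Measure.map (X i) P = mixMeasure F) :
    ∀ᵐ ω ∂P, Tendsto (fun n => Tq q (empCdf (fun i => X i ω) n)) atTop
      (nhds (Tq q (mixCdf F))) := by
  obtain ⟨hprob, hF1⟩ := hF
  have hF0 : ∀ᵐ m ∂F, 0 < m := hF1.mono fun _ hm => zero_lt_one.trans_le hm
  obtain ⟨t₀, ht₀, hbelow, habove⟩ :=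
    exists_crossing hq hq1 hF1 (measure_one_lt_ne_zero hF1 hne)
  rw [Tq_eq_of_crossing ht₀ hbelow habove]
  have hrat : ∀ᵐ ω ∂P, ∀ r : ℚ,
      Tendsto (fun n => empCdf (X · ω) n r) atTop (𝓝 (mixCdf F r)) :=
    ae_all_iff.2 fun r => by
      simpa only [measureReal_mixMeasure_Iio hF0] using
        ae_tendsto_empCdf hmeas (fun i j hij => hindep.indepFun hij) hdist r
  filter_upwards [hrat] with ω hω
  have hG := continuous_mixCdf hF0
  exact tendsto_Tq_of_crossing hG ht₀ hbelow habove (monotone_empCdf _)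
    (tendsto_of_monotone_of_tendsto_rat (monotone_empCdf _) hG hω)
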